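/- For n = n₁ + n₂ ≥ 2, the collection of edge sets of minimally rigid graphs on a fixed vertex set with n₁ vertices of type 1 and n₂ vertices of type 2 forms the set of bases of a matroid whose ground set is the edge set of the complete graph on n vertices. -/
import Mathlib


open SimpleGraph

variable {V : Type*}

/-- Number of type-1 vertices in a vertex set. -/
noncomputable def n1 (t1 : V → Prop) (S : Set V) : ℕ := {v ∈ S | t1 v}.ncard

/-- Number of type-2 vertices in a vertex set. -/
noncomputable def n2 (t1 : V → Prop) (S : Set V) : ℕ := {v ∈ S | ¬ t1 v}.ncard

/-- Number of edges of `G` with both endpoints in `S`. -/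
noncomputable def edgesIn (G : SimpleGraph V) (S : Set V) : ℕ :=
  {e ∈ G.edgeSet | ∀ v ∈ e, v ∈ S}.ncard

/-- Sparsity: every subgraph on `n' ≥ 2` vertices has at most
`n₁' + 2 n₂' + min 0 (n₁' - 3)` edges. -/
def Sparse (G : SimpleGraph V) (t1 : V → Prop) : Prop :=
  ∀ S : Set V, 2 ≤ S.ncard →
    (edgesIn G S : ℤ) ≤ (n1 t1 S : ℤ) + 2 * n2 t1 S + min 0 ((n1 t1 S : ℤ) - 3)

/-- Minimal rigidity: either one vertex, or sparse with exactly
`n₁ + 2 n₂ + min 0 (n₁ - 3)` edges. -/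
def MinRigid (G : SimpleGraph V) (t1 : V → Prop) : Prop :=
  Nat.card V = 1 ∨
    (Sparse G t1 ∧
      (G.edgeSet.ncard : ℤ) = (n1 t1 Set.univ : ℤ) + 2 * n2 t1 Set.univ +
        min 0 ((n1 t1 Set.univ : ℤ) - 3))

/-- Rigidity: contains a spanning minimally rigid subgraph. -/
def Rigid (G : SimpleGraph V) (t1 : V → Prop) : Prop :=
  ∃ H : SimpleGraph V, H ≤ G ∧ MinRigid H t1

/-- A rigid block: a vertex-induced rigid subgraph, identified with its vertex set. -/
def RigidBlock (G : SimpleGraph V) (t1 : V → Prop) (S : Set V) : Prop :=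
  Rigid (G.induce S) (fun v => t1 ↑v)

section AuxAll
open scoped Classical
set_option linter.unusedSectionVars false
variable [Fintype V] [DecidableEq V]
open scoped Classical
set_option linter.unusedSectionVars false
variable [Fintype V] [DecidableEq V] (t1 : V → Prop)

noncomputable def fct (S : Set V) : ℤ :=
  (n1 t1 S : ℤ) + 2 * n2 t1 S + min 0 ((n1 t1 S : ℤ) - 3)

lemma fct_def (S : Set V) :
    fct t1 S = (n1 t1 S : ℤ) + 2 * n2 t1 S + min 0 ((n1 t1 S : ℤ) - 3) := rfl

lemma sparse_iff (G : SimpleGraph V) :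
    Sparse G t1 ↔ ∀ S : Set V, 2 ≤ S.ncard → (edgesIn G S : ℤ) ≤ fct t1 S := Iff.rfl

lemma filt_diff (p : V → Prop) {S : Set V} {v : V} (hv : v ∈ S) :
    {x ∈ S | p x}.ncard = {x ∈ S \ {v} | p x}.ncard + (if p v then 1 else 0) := by
  by_cases h : p v
  · rw [if_pos h]
    have he : {x ∈ S | p x} = insert v {x ∈ S \ {v} | p x} := by
      ext x
      simp only [Set.mem_setOf_eq, Set.mem_insert_iff, Set.mem_diff, Set.mem_singleton_iff]
      by_cases hx : x = v
      · subst hx; simp [hv, h]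
      · simp [hx]
    rw [he, Set.ncard_insert_of_notMem (by simp) (Set.toFinite _)]
  · rw [if_neg h, add_zero]
    congr 1
    ext x
    simp only [Set.mem_setOf_eq, Set.mem_diff, Set.mem_singleton_iff]
    constructor
    · rintro ⟨hxS, hpx⟩
      exact ⟨⟨hxS, fun hxv => h (hxv ▸ hpx)⟩, hpx⟩
    · rintro ⟨⟨hxS, _⟩, hpx⟩; exact ⟨hxS, hpx⟩

lemma n1_diff {S : Set V} {v : V} (hv : v ∈ S) :
    n1 t1 S = n1 t1 (S \ {v}) + (if t1 v then 1 else 0) := filt_diff t1 hv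

lemma n2_diff {S : Set V} {v : V} (hv : v ∈ S) :
    n2 t1 S = n2 t1 (S \ {v}) + (if t1 v then 0 else 1) := by
  have := filt_diff (fun x => ¬ t1 x) (S := S) hv
  by_cases h : t1 v <;> simpa [n2, h] using this

lemma n1_add_n2 (S : Set V) : n1 t1 S + n2 t1 S = S.ncard := by
  have hd : Disjoint {v ∈ S | t1 v} {v ∈ S | ¬ t1 v} := by
    rw [Set.disjoint_left]; rintro v ⟨-, h⟩ ⟨-, h'⟩; exact h' h
  have hu : {v ∈ S | t1 v} ∪ {v ∈ S | ¬ t1 v} = S := by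
    ext v; by_cases h : t1 v <;> simp [h]
  rw [n1, n2, ← Set.ncard_union_eq hd (Set.toFinite _) (Set.toFinite _), hu]

lemma n1_mono {S T : Set V} (h : S ⊆ T) : n1 t1 S ≤ n1 t1 T :=
  Set.ncard_le_ncard (fun x hx => ⟨h hx.1, hx.2⟩) (Set.toFinite _)

lemma fct_ge_one {S : Set V} (hS : 2 ≤ S.ncard) : 1 ≤ fct t1 S := by
  have := n1_add_n2 t1 S
  rw [fct_def]
  omega

lemma fct_diff_t2 {S : Set V} {v : V} (hv : v ∈ S) (h : ¬ t1 v) :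
    fct t1 S = fct t1 (S \ {v}) + 2 := by
  have h1 := n1_diff t1 hv
  have h2 := n2_diff t1 hv
  rw [if_neg h] at h1 h2
  rw [fct_def, fct_def]
  omega

lemma fct_diff_t1_ge {S : Set V} {v : V} (hv : v ∈ S) (h : t1 v) :
    fct t1 (S \ {v}) + 1 ≤ fct t1 S := by
  have h1 := n1_diff t1 hv
  have h2 := n2_diff t1 hv
  rw [if_pos h] at h1 h2
  rw [fct_def, fct_def]
  omega

lemma fct_diff_t1_eq {S : Set V} {v : V} (hv : v ∈ S) (h : t1 v) (h4 : 4 ≤ n1 t1 S) :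
    fct t1 S = fct t1 (S \ {v}) + 1 := by
  have h1 := n1_diff t1 hv
  have h2 := n2_diff t1 hv
  rw [if_pos h] at h1 h2
  rw [fct_def, fct_def]
  omega

lemma fct_diff_ge {S : Set V} {v : V} (hv : v ∈ S) :
    fct t1 (S \ {v}) + (if t1 v then 1 else 2) ≤ fct t1 S := by
  by_cases h : t1 v
  · rw [if_pos h]; exact fct_diff_t1_ge t1 hv h
  · rw [if_neg h, (fct_diff_t2 t1 hv h)]

lemma filt_modular (p : V → Prop) (X Y : Set V) :
    {x ∈ X ∪ Y | p x}.ncard + {x ∈ X ∩ Y | p x}.ncard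
      = {x ∈ X | p x}.ncard + {x ∈ Y | p x}.ncard := by
  have h1 : {x ∈ X ∪ Y | p x} = {x ∈ X | p x} ∪ {x ∈ Y | p x} := by
    ext x; simp only [Set.mem_setOf_eq, Set.mem_union]; tauto
  have h2 : {x ∈ X ∩ Y | p x} = {x ∈ X | p x} ∩ {x ∈ Y | p x} := by
    ext x; simp only [Set.mem_setOf_eq, Set.mem_inter_iff]; tauto
  rw [h1, h2]
  exact Set.ncard_union_add_ncard_inter _ _ (Set.toFinite _) (Set.toFinite _)

lemma fct_submod (X Y : Set V) :
    fct t1 (X ∪ Y) + fct t1 (X ∩ Y) ≤ fct t1 X + fct t1 Y := by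
  have m1 : n1 t1 (X ∪ Y) + n1 t1 (X ∩ Y) = n1 t1 X + n1 t1 Y := filt_modular t1 X Y
  have m2 : n2 t1 (X ∪ Y) + n2 t1 (X ∩ Y) = n2 t1 X + n2 t1 Y :=
    filt_modular (fun x => ¬ t1 x) X Y
  have mo1 : n1 t1 (X ∩ Y) ≤ n1 t1 X := n1_mono t1 Set.inter_subset_left
  have mo2 : n1 t1 X ≤ n1 t1 (X ∪ Y) := n1_mono t1 Set.subset_union_left
  have mo3 : n1 t1 (X ∩ Y) ≤ n1 t1 Y := n1_mono t1 Set.inter_subset_right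
  rw [fct_def, fct_def, fct_def, fct_def]
  omega


def ES (E : Set (Sym2 V)) (S : Set V) : Set (Sym2 V) := {d ∈ E | ∀ v ∈ d, v ∈ S}

lemma mem_ES {E : Set (Sym2 V)} {S : Set V} {d : Sym2 V} :
    d ∈ ES E S ↔ d ∈ E ∧ ∀ v ∈ d, v ∈ S := Iff.rfl

lemma edgesIn_eq (G : SimpleGraph V) (S : Set V) : edgesIn G S = (ES G.edgeSet S).ncard := rfl

lemma ES_subset (E : Set (Sym2 V)) (S : Set V) : ES E S ⊆ E := fun _ h => h.1

lemma ES_univ (E : Set (Sym2 V)) : ES E Set.univ = E := by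
  ext d; simp [mem_ES]

lemma ES_inter (E : Set (Sym2 V)) (X Y : Set V) : ES E X ∩ ES E Y = ES E (X ∩ Y) := by
  ext d
  simp only [Set.mem_inter_iff, mem_ES, Set.mem_inter_iff]
  constructor
  · rintro ⟨⟨h1, h2⟩, ⟨-, h3⟩⟩; exact ⟨h1, fun v hv => ⟨h2 v hv, h3 v hv⟩⟩
  · rintro ⟨h1, h2⟩; exact ⟨⟨h1, fun v hv => (h2 v hv).1⟩, ⟨h1, fun v hv => (h2 v hv).2⟩⟩

lemma ES_submod (E : Set (Sym2 V)) (X Y : Set V) :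
    (ES E X).ncard + (ES E Y).ncard ≤ (ES E (X ∪ Y)).ncard + (ES E (X ∩ Y)).ncard := by
  rw [← Set.ncard_union_add_ncard_inter _ _ (Set.toFinite _) (Set.toFinite _), ES_inter]
  have hsub : ES E X ∪ ES E Y ⊆ ES E (X ∪ Y) := by
    rintro d (⟨h1, h2⟩ | ⟨h1, h2⟩)
    · exact ⟨h1, fun v hv => Or.inl (h2 v hv)⟩
    · exact ⟨h1, fun v hv => Or.inr (h2 v hv)⟩
  exact Nat.add_le_add_right (Set.ncard_le_ncard hsub (Set.toFinite _)) _

lemma ES_small_empty {G : SimpleGraph V} {S : Set V} (h : S.ncard ≤ 1) :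
    ES G.edgeSet S = ∅ := by
  by_contra hne
  obtain ⟨d, hd, hdS⟩ := Set.nonempty_iff_ne_empty.2 hne
  revert hd hdS
  induction' d using Sym2.ind with x y
  · intro hd hdS
    have hadj : G.Adj x y := hd
    have hxy : x ≠ y := hadj.ne
    have hxS : x ∈ S := hdS x (Sym2.mem_mk_left x y)
    have hyS : y ∈ S := hdS y (Sym2.mem_mk_right x y)
    have hsub : {x, y} ⊆ S := by
      intro z hz
      simp only [Set.mem_insert_iff, Set.mem_singleton_iff] at hz
      rcases hz with rfl | rfl <;> assumption
    have := Set.ncard_le_ncard hsub (Set.toFinite _)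
    rw [Set.ncard_pair hxy] at this
    omega

lemma edgeSet_fromEdgeSet_eq {B : Set (Sym2 V)} (hB : ∀ d ∈ B, ¬ d.IsDiag) :
    (fromEdgeSet B).edgeSet = B := by
  rw [edgeSet_fromEdgeSet]
  ext d
  simp only [Set.mem_diff, Set.mem_setOf_eq]
  exact ⟨fun h => h.1, fun h => ⟨h, hB d h⟩⟩


lemma sparse_add_vertex (t1 : V → Prop) {G' : SimpleGraph V} {A : Set V}
    (hA : ∀ d ∈ G'.edgeSet, ∀ x ∈ d, x ∈ A)
    (hs : Sparse G' t1) {v : V} (hv : v ∉ A)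
    {N : Set (Sym2 V)} (hN : ∀ d ∈ N, ∃ u ∈ A, d = s(v, u))
    (hcard : (N.ncard : ℤ) ≤ if t1 v then 1 else 2) :
    Sparse (fromEdgeSet (G'.edgeSet ∪ N)) t1 := by
  have hs' := (sparse_iff t1 G').1 hs
  rw [sparse_iff]
  intro S hS
  set H := fromEdgeSet (G'.edgeSet ∪ N) with hH
  have hkey : ES H.edgeSet S ⊆ ES G'.edgeSet S ∪ ES N S := by
    rintro d ⟨hd, hdS⟩
    rw [hH, edgeSet_fromEdgeSet] at hd
    rcases hd.1 with h | h
    · exact Or.inl ⟨h, hdS⟩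
    · exact Or.inr ⟨h, hdS⟩
  have hb : (edgesIn H S : ℤ) ≤ ((ES G'.edgeSet S).ncard : ℤ) + ((ES N S).ncard : ℤ) := by
    have h1 : edgesIn H S ≤ (ES G'.edgeSet S ∪ ES N S).ncard := by
      rw [edgesIn_eq]; exact Set.ncard_le_ncard hkey (Set.toFinite _)
    have h2 := Set.ncard_union_le (ES G'.edgeSet S) (ES N S)
    exact_mod_cast le_trans h1 h2
  by_cases hvS : v ∈ S
  · have hG'eq : ES G'.edgeSet S = ES G'.edgeSet (S \ {v}) := by
      ext d
      simp only [mem_ES]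
      constructor
      · rintro ⟨hd, hin⟩
        refine ⟨hd, fun z hz => ⟨hin z hz, fun hzv => ?_⟩⟩
        rw [Set.mem_singleton_iff] at hzv
        exact hv (hzv ▸ hA d hd z hz)
      · rintro ⟨hd, hin⟩
        exact ⟨hd, fun z hz => (hin z hz).1⟩
    by_cases h2' : 2 ≤ (S \ {v}).ncard
    · have hG'le := hs' (S \ {v}) h2'
      have hfd := fct_diff_ge t1 hvS
      have hNle : ((ES N S).ncard : ℤ) ≤ (N.ncard : ℤ) := by
        exact_mod_cast Set.ncard_le_ncard (ES_subset _ _) (Set.toFinite _)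
      calc (edgesIn H S : ℤ) ≤ ((ES G'.edgeSet S).ncard : ℤ) + ((ES N S).ncard : ℤ) := hb
        _ = (edgesIn G' (S \ {v}) : ℤ) + ((ES N S).ncard : ℤ) := by
            rw [edgesIn_eq, hG'eq]
        _ ≤ fct t1 (S \ {v}) + (if t1 v then 1 else 2) :=
            add_le_add hG'le (le_trans hNle hcard)
        _ ≤ fct t1 S := hfd
    · have hc1 : (S \ {v}).ncard + 1 = S.ncard := Set.ncard_diff_singleton_add_one hvS (Set.toFinite _)
      have h1 : (S \ {v}).ncard = 1 := by omega
      obtain ⟨w, hw⟩ := Set.ncard_eq_one.1 h1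
      have hG'0 : ES G'.edgeSet (S \ {v}) = ∅ := ES_small_empty (by omega)
      have hN1 : ES N S ⊆ {s(v, w)} := by
        rintro d ⟨hdN, hdS⟩
        obtain ⟨u, huA, rfl⟩ := hN d hdN
        have huS : u ∈ S := hdS u (Sym2.mem_mk_right v u)
        have huv : u ≠ v := fun h => hv (h ▸ huA)
        have huw : u ∈ S \ {v} := ⟨huS, by simp [huv]⟩
        rw [hw, Set.mem_singleton_iff] at huw
        rw [huw]
        exact Set.mem_singleton _
      have hle1 : (edgesIn H S : ℤ) ≤ 1 := by
        have hh := Set.ncard_le_ncard hN1 (Set.toFinite _)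
        rw [Set.ncard_singleton] at hh
        have h0 : (ES G'.edgeSet S).ncard = 0 := by
          rw [hG'eq, hG'0]; exact Set.ncard_empty _
        omega
      linarith [fct_ge_one t1 hS]
  · have hN0 : ES N S = ∅ := by
      ext d
      simp only [mem_ES, Set.mem_empty_iff_false, iff_false, not_and]
      intro hdN hdS
      obtain ⟨u, huA, rfl⟩ := hN d hdN
      exact hvS (hdS v (Sym2.mem_mk_left v u))
    have hle : (edgesIn H S : ℤ) ≤ (edgesIn G' S : ℤ) := by
      rw [hN0, Set.ncard_empty] at hb
      rw [edgesIn_eq (G := G')]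
      omega
    exact le_trans hle (hs' S hS)

lemma edgeSet_add_vertex {G' : SimpleGraph V} {A : Set V}
    (hA : ∀ d ∈ G'.edgeSet, ∀ x ∈ d, x ∈ A) {v : V} (hv : v ∉ A)
    {N : Set (Sym2 V)} (hN : ∀ d ∈ N, ∃ u ∈ A, d = s(v, u)) :
    (fromEdgeSet (G'.edgeSet ∪ N)).edgeSet = G'.edgeSet ∪ N ∧
    (G'.edgeSet ∪ N).ncard = G'.edgeSet.ncard + N.ncard := by
  have hnd : ∀ d ∈ G'.edgeSet ∪ N, ¬ d.IsDiag := by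
    rintro d (h | h)
    · exact G'.not_isDiag_of_mem_edgeSet h
    · obtain ⟨u, huA, rfl⟩ := hN d h
      rw [Sym2.mk_isDiag_iff]
      exact fun hvu => hv (hvu ▸ huA)
  have hdisj : Disjoint G'.edgeSet N := by
    rw [Set.disjoint_left]
    intro d hdE hdN
    obtain ⟨u, huA, rfl⟩ := hN d hdN
    exact hv (hA _ hdE v (Sym2.mem_mk_left v u))
  exact ⟨edgeSet_fromEdgeSet_eq hnd,
    Set.ncard_union_eq hdisj (Set.toFinite _) (Set.toFinite _)⟩

lemma exists_sparse_on (t1 : V → Prop) :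
    ∀ n : ℕ, ∀ A : Set V, A.ncard = n → 2 ≤ n →
    ∃ G : SimpleGraph V, (∀ d ∈ G.edgeSet, ∀ x ∈ d, x ∈ A) ∧ Sparse G t1 ∧
      (G.edgeSet.ncard : ℤ) = fct t1 A := by
  intro n
  induction n using Nat.strong_induction_on with
  | _ n IH =>
  intro A hcard hn
  rcases eq_or_lt_of_le hn with h2 | h3
  · -- base case n = 2 : a single edge
    obtain ⟨x, y, hxy, rfl⟩ := Set.ncard_eq_two.1 (hcard.trans h2.symm)
    have hE : (fromEdgeSet {s(x, y)}).edgeSet = {s(x, y)} := by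
      apply edgeSet_fromEdgeSet_eq
      intro d hd
      rw [Set.mem_singleton_iff] at hd
      rw [hd, Sym2.mk_isDiag_iff]
      exact hxy
    refine ⟨fromEdgeSet {s(x, y)}, ?_, ?_, ?_⟩
    · rw [hE]
      intro d hd z hz
      rw [Set.mem_singleton_iff] at hd
      rw [hd, Sym2.mem_iff] at hz
      rcases hz with rfl | rfl
      · exact Set.mem_insert _ _
      · exact Set.mem_insert_of_mem _ rfl
    · rw [sparse_iff]
      intro S hS
      have h1 : edgesIn (fromEdgeSet {s(x, y)}) S ≤ 1 := by
        rw [edgesIn_eq]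
        have hsub : ES (fromEdgeSet {s(x, y)}).edgeSet S ⊆ {s(x, y)} :=
          (ES_subset (fromEdgeSet {s(x, y)}).edgeSet S).trans hE.subset
        have hh := Set.ncard_le_ncard hsub (Set.toFinite _)
        rw [Set.ncard_singleton] at hh
        exact hh
      have h2' := fct_ge_one t1 hS
      omega
    · rw [hE, Set.ncard_singleton]
      have ha := n1_add_n2 t1 {x, y}
      rw [Set.ncard_pair hxy] at ha
      rw [fct_def]
      omega
  · by_cases hex : ∃ v ∈ A, ¬ t1 v
    · -- peel a type-2 vertex
      obtain ⟨v, hvA, hvt⟩ := hex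
      have hA' : (A \ {v}).ncard = n - 1 := by
        have := Set.ncard_diff_singleton_add_one hvA (Set.toFinite _)
        omega
      obtain ⟨G', hG'A, hG's, hG'c⟩ := IH (n - 1) (by omega) (A \ {v}) hA' (by omega)
      have hv' : v ∉ A \ {v} := by simp
      have h1lt : 1 < (A \ {v}).ncard := by omega
      obtain ⟨u₁, u₂, hu₁, hu₂, hne⟩ := (Set.one_lt_ncard_iff (Set.toFinite _)).1 h1lt
      set N : Set (Sym2 V) := {s(v, u₁), s(v, u₂)} with hNdef
      have hN : ∀ d ∈ N, ∃ u ∈ A \ {v}, d = s(v, u) := by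
        intro d hd
        simp only [hNdef, Set.mem_insert_iff, Set.mem_singleton_iff] at hd
        rcases hd with rfl | rfl
        · exact ⟨u₁, hu₁, rfl⟩
        · exact ⟨u₂, hu₂, rfl⟩
      have hnee : s(v, u₁) ≠ s(v, u₂) := by
        intro h'
        rw [Sym2.eq_iff] at h'
        rcases h' with ⟨-, h⟩ | ⟨h, -⟩
        · exact hne h
        · rw [← h] at hu₂
          exact hv' hu₂
      have hNcard : N.ncard = 2 := Set.ncard_pair hnee
      have hsp := sparse_add_vertex t1 hG'A hG's hv' hN (by rw [hNcard, if_neg hvt]; norm_num)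
      obtain ⟨hEeq, hEcard⟩ := edgeSet_add_vertex hG'A hv' hN
      refine ⟨fromEdgeSet (G'.edgeSet ∪ N), ?_, hsp, ?_⟩
      · rw [hEeq]
        rintro d (hd | hd) z hz
        · exact (hG'A d hd z hz).1
        · obtain ⟨u, huA, rfl⟩ := hN d hd
          rw [Sym2.mem_iff] at hz
          rcases hz with rfl | rfl
          · exact hvA
          · exact huA.1
      · rw [hEeq, hEcard, hNcard]
        push_cast
        rw [hG'c]
        have hfd := fct_diff_t2 t1 hvA hvt
        omega
    · push_neg at hex
      have hall : ∀ v ∈ A, t1 v := hex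
      have hn1A : n1 t1 A = n := by
        have hAeq : {v ∈ A | t1 v} = A := by
          ext z
          simp only [Set.mem_setOf_eq]
          exact ⟨fun h => h.1, fun h => ⟨h, hall z h⟩⟩
        unfold n1
        rw [hAeq, hcard]
      by_cases h3' : n = 3
      · -- triangle on three type-1 vertices
        subst h3'
        obtain ⟨x, y, z, hxy, hxz, hyz, rfl⟩ := Set.ncard_eq_three.1 hcard
        set B : Set (Sym2 V) := {s(x, y), s(x, z), s(y, z)} with hBdef
        have hnd : ∀ d ∈ B, ¬ d.IsDiag := by
          intro d hd
          simp only [hBdef, Set.mem_insert_iff, Set.mem_singleton_iff] at hd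
          rcases hd with rfl | rfl | rfl <;> rw [Sym2.mk_isDiag_iff] <;> assumption
        have hE : (fromEdgeSet B).edgeSet = B := edgeSet_fromEdgeSet_eq hnd
        have d1 : s(x, y) ≠ s(x, z) := by
          intro h'
          rw [Sym2.eq_iff] at h'
          rcases h' with ⟨-, h⟩ | ⟨h, -⟩
          · exact hyz h
          · exact hxz h
        have d2 : s(x, y) ≠ s(y, z) := by
          intro h'
          rw [Sym2.eq_iff] at h'
          rcases h' with ⟨h, -⟩ | ⟨h, -⟩
          · exact hxy h
          · exact hxz h
        have d3 : s(x, z) ≠ s(y, z) := by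
          intro h'
          rw [Sym2.eq_iff] at h'
          rcases h' with ⟨h, -⟩ | ⟨-, h⟩
          · exact hxy h
          · exact hyz h.symm
        have hBcard : B.ncard = 3 := by
          rw [hBdef]
          rw [Set.ncard_insert_of_notMem (by simp [d1, d2]) (Set.toFinite _),
            Set.ncard_pair d3]
        refine ⟨fromEdgeSet B, ?_, ?_, ?_⟩
        · rw [hE]
          intro d hd w hw
          simp only [hBdef, Set.mem_insert_iff, Set.mem_singleton_iff] at hd
          rcases hd with rfl | rfl | rfl <;> rw [Sym2.mem_iff] at hw <;>
            rcases hw with rfl | rfl <;> simp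
        · rw [sparse_iff]
          intro S hS
          by_cases hin : x ∈ S ∧ y ∈ S ∧ z ∈ S
          · have e3 : edgesIn (fromEdgeSet B) S ≤ 3 := by
              rw [edgesIn_eq]
              have hsub : ES (fromEdgeSet B).edgeSet S ⊆ B :=
                (ES_subset (fromEdgeSet B).edgeSet S).trans hE.subset
              have hh := Set.ncard_le_ncard hsub (Set.toFinite _)
              rw [hBcard] at hh
              exact hh
            have hsub3 : ({x, y, z} : Set V) ⊆ {w ∈ S | t1 w} := by
              intro w hw
              have hwt : t1 w := hall w hw
              simp only [Set.mem_insert_iff, Set.mem_singleton_iff] at hw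
              rcases hw with rfl | rfl | rfl
              · exact ⟨hin.1, hwt⟩
              · exact ⟨hin.2.1, hwt⟩
              · exact ⟨hin.2.2, hwt⟩
            have h3le : 3 ≤ n1 t1 S := by
              have hh := Set.ncard_le_ncard hsub3 (Set.toFinite _)
              rw [hcard] at hh
              exact hh
            rw [fct_def]
            omega
          · have hsmall : ∃ d0 : Sym2 V, ES (fromEdgeSet B).edgeSet S ⊆ {d0} := by
              by_cases hx : x ∈ S
              · by_cases hy : y ∈ S
                · have hz' : z ∉ S := fun h => hin ⟨hx, hy, h⟩
                  refine ⟨s(x, y), ?_⟩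
                  rintro d ⟨hd, hdS⟩
                  rw [hE] at hd
                  simp only [hBdef, Set.mem_insert_iff, Set.mem_singleton_iff] at hd
                  rcases hd with rfl | rfl | rfl
                  · exact Set.mem_singleton _
                  · exact absurd (hdS z (Sym2.mem_mk_right x z)) hz'
                  · exact absurd (hdS z (Sym2.mem_mk_right y z)) hz'
                · refine ⟨s(x, z), ?_⟩
                  rintro d ⟨hd, hdS⟩
                  rw [hE] at hd
                  simp only [hBdef, Set.mem_insert_iff, Set.mem_singleton_iff] at hd
                  rcases hd with rfl | rfl | rfl
                  · exact absurd (hdS y (Sym2.mem_mk_right x y)) hy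
                  · exact Set.mem_singleton _
                  · exact absurd (hdS y (Sym2.mem_mk_left y z)) hy
              · refine ⟨s(y, z), ?_⟩
                rintro d ⟨hd, hdS⟩
                rw [hE] at hd
                simp only [hBdef, Set.mem_insert_iff, Set.mem_singleton_iff] at hd
                rcases hd with rfl | rfl | rfl
                · exact absurd (hdS x (Sym2.mem_mk_left x y)) hx
                · exact absurd (hdS x (Sym2.mem_mk_left x z)) hx
                · exact Set.mem_singleton _
            obtain ⟨d0, hd0⟩ := hsmall
            have h1 : edgesIn (fromEdgeSet B) S ≤ 1 := by
              rw [edgesIn_eq]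
              have hh := Set.ncard_le_ncard hd0 (Set.toFinite _)
              rw [Set.ncard_singleton] at hh
              exact hh
            have h2' := fct_ge_one t1 hS
            omega
        · rw [hE, hBcard]
          have hab := n1_add_n2 t1 {x, y, z}
          rw [hcard] at hab
          rw [fct_def]
          omega
      · -- n ≥ 4, all type 1 : peel any vertex
        have hn4 : 4 ≤ n := by omega
        obtain ⟨v, hvA⟩ := Set.nonempty_of_ncard_ne_zero (s := A) (by omega)
        have hA' : (A \ {v}).ncard = n - 1 := by
          have := Set.ncard_diff_singleton_add_one hvA (Set.toFinite _)
          omega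
        obtain ⟨G', hG'A, hG's, hG'c⟩ := IH (n - 1) (by omega) (A \ {v}) hA' (by omega)
        have hv' : v ∉ A \ {v} := by simp
        obtain ⟨u, hu⟩ := Set.nonempty_of_ncard_ne_zero (s := A \ {v}) (by omega)
        set N : Set (Sym2 V) := {s(v, u)} with hNdef
        have hN : ∀ d ∈ N, ∃ w ∈ A \ {v}, d = s(v, w) := by
          intro d hd
          rw [hNdef, Set.mem_singleton_iff] at hd
          exact ⟨u, hu, hd⟩
        have hNcard : N.ncard = 1 := Set.ncard_singleton _
        have ht1v : t1 v := hall v hvA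
        have hsp := sparse_add_vertex t1 hG'A hG's hv' hN (by rw [hNcard, if_pos ht1v]; norm_num)
        obtain ⟨hEeq, hEcard⟩ := edgeSet_add_vertex hG'A hv' hN
        refine ⟨fromEdgeSet (G'.edgeSet ∪ N), ?_, hsp, ?_⟩
        · rw [hEeq]
          rintro d (hd | hd) w hw
          · exact (hG'A d hd w hw).1
          · obtain ⟨w', hw'A, rfl⟩ := hN d hd
            rw [Sym2.mem_iff] at hw
            rcases hw with rfl | rfl
            · exact hvA
            · exact hw'A.1
        · rw [hEeq, hEcard, hNcard]
          push_cast
          rw [hG'c]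
          have hfd := fct_diff_t1_eq t1 hvA ht1v (by omega)
          omega

end AuxAll

/-- The minimally rigid graphs on a fixed vertex set with `n ≥ 2` vertices form
the bases of a matroid with ground set the edges of the complete graph:
the family is nonempty, all members have the same number of edges, and the
basis exchange axiom holds. -/
theorem stmt8 {V : Type*} [Fintype V] [DecidableEq V] (t1 : V → Prop)
    (h2 : 2 ≤ Nat.card V) :
    (∃ G : SimpleGraph V, MinRigid G t1) ∧
    (∀ G₁ G₂ : SimpleGraph V, MinRigid G₁ t1 → MinRigid G₂ t1 →
      G₁.edgeSet.ncard = G₂.edgeSet.ncard) ∧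
    (∀ G₁ G₂ : SimpleGraph V, MinRigid G₁ t1 → MinRigid G₂ t1 →
      ∀ e ∈ G₂.edgeSet \ G₁.edgeSet, ∃ f ∈ G₁.edgeSet \ G₂.edgeSet,
        MinRigid (SimpleGraph.fromEdgeSet (insert e (G₁.edgeSet \ {f}))) t1) := by
  classical
  refine ⟨?_, ?_, ?_⟩
  · obtain ⟨G, hGA, hGs, hGc⟩ :=
      exists_sparse_on t1 (Nat.card V) Set.univ (Set.ncard_univ V) h2
    exact ⟨G, Or.inr ⟨hGs, hGc⟩⟩
  · intro G₁ G₂ hm1 hm2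
    rcases hm1 with h1 | ⟨-, hc1⟩
    · omega
    rcases hm2 with h1 | ⟨-, hc2⟩
    · omega
    exact_mod_cast hc1.trans hc2.symm
  · intro G₁ G₂ hm1 hm2 e he
    rcases hm1 with h1 | ⟨hs1, hc1⟩
    · omega
    rcases hm2 with h1 | ⟨hs2, hc2⟩
    · omega
    obtain ⟨he2, he1⟩ := he
    rw [← fct_def t1 Set.univ] at hc1 hc2
    have hs1' := (sparse_iff t1 G₁).1 hs1
    have hs2' := (sparse_iff t1 G₂).1 hs2
    revert he1 he2
    induction' e using Sym2.ind with x y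
    intro he2 he1
    have hadj : G₂.Adj x y := he2
    have hxy : x ≠ y := hadj.ne
    have hxyU : ∀ S : Set V, x ∈ S → y ∈ S → ∀ v ∈ s(x, y), v ∈ S := by
      intro S hx hy v hv
      rw [Sym2.mem_iff] at hv
      rcases hv with rfl | rfl <;> assumption
    set T : Set (Set V) :=
      {S | x ∈ S ∧ y ∈ S ∧ 2 ≤ S.ncard ∧ (edgesIn G₁ S : ℤ) = fct t1 S} with hTdef
    have hunivT : Set.univ ∈ T := by
      refine ⟨trivial, trivial, ?_, ?_⟩
      · rw [Set.ncard_univ]; exact h2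
      · rw [edgesIn_eq, ES_univ]; exact hc1
    have hTne : (Set.ncard '' T).Nonempty := ⟨_, Set.mem_image_of_mem _ hunivT⟩
    obtain ⟨S₀, hS₀T, hS₀min⟩ : ∃ S₀ ∈ T, ∀ S ∈ T, S₀.ncard ≤ S.ncard := by
      obtain ⟨S₀, hS₀T, hS₀c⟩ := Nat.sInf_mem hTne
      exact ⟨S₀, hS₀T, fun S hS => by
        rw [hS₀c]; exact Nat.sInf_le (Set.mem_image_of_mem _ hS)⟩
    obtain ⟨hxS₀, hyS₀, hS₀2, hS₀tight⟩ := hS₀T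
    have hmin : ∀ S ∈ T, S₀ ⊆ S := by
      intro S hST
      obtain ⟨hxS, hyS, hS2c, hStight⟩ := hST
      have hpair : ({x, y} : Set V) ⊆ S ∩ S₀ := by
        intro w hw
        simp only [Set.mem_insert_iff, Set.mem_singleton_iff] at hw
        rcases hw with rfl | rfl
        · exact ⟨hxS, hxS₀⟩
        · exact ⟨hyS, hyS₀⟩
      have hintc : 2 ≤ (S ∩ S₀).ncard := by
        have hh := Set.ncard_le_ncard hpair (Set.toFinite _)
        rw [Set.ncard_pair hxy] at hh
        exact hh
      have hunc : 2 ≤ (S ∪ S₀).ncard :=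
        le_trans hS2c (Set.ncard_le_ncard Set.subset_union_left (Set.toFinite _))
      have hb1 := hs1' (S ∪ S₀) hunc
      have hb2 := hs1' (S ∩ S₀) hintc
      have hfsub := fct_submod t1 S S₀
      have hsub' : (edgesIn G₁ S : ℤ) + edgesIn G₁ S₀ ≤
          (edgesIn G₁ (S ∪ S₀) : ℤ) + edgesIn G₁ (S ∩ S₀) := by
        rw [edgesIn_eq, edgesIn_eq, edgesIn_eq, edgesIn_eq]
        exact_mod_cast ES_submod G₁.edgeSet S S₀
      have htight : (edgesIn G₁ (S ∩ S₀) : ℤ) = fct t1 (S ∩ S₀) := by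
        linarith
      have hSint : S ∩ S₀ ∈ T := ⟨⟨hxS, hxS₀⟩, ⟨hyS, hyS₀⟩, hintc, htight⟩
      have hle := hS₀min _ hSint
      have heq := Set.eq_of_subset_of_ncard_le Set.inter_subset_right hle (Set.toFinite _)
      intro w hw
      rw [← heq] at hw
      exact hw.1
    have heS₀ : s(x, y) ∈ ES G₂.edgeSet S₀ := ⟨he2, hxyU S₀ hxS₀ hyS₀⟩
    have hgex : ∃ g ∈ ES G₁.edgeSet S₀, g ∉ G₂.edgeSet := by
      by_contra hcon
      push_neg at hcon
      have hsub2 : ES G₁.edgeSet S₀ ⊆ ES G₂.edgeSet S₀ \ {s(x, y)} := by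
        rintro g ⟨hg1, hgS⟩
        refine ⟨⟨hcon g ⟨hg1, hgS⟩, hgS⟩, ?_⟩
        intro hge
        rw [Set.mem_singleton_iff] at hge
        rw [hge] at hg1
        exact he1 hg1
      have hle2 := Set.ncard_le_ncard hsub2 (Set.toFinite _)
      have hd := Set.ncard_diff_singleton_add_one heS₀ (Set.toFinite _)
      have hb2 := hs2' S₀ hS₀2
      rw [edgesIn_eq] at hS₀tight hb2
      omega
    obtain ⟨g, ⟨hg1, hgS₀⟩, hg2⟩ := hgex
    refine ⟨g, ⟨hg1, hg2⟩, ?_⟩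
    set B : Set (Sym2 V) := insert s(x, y) (G₁.edgeSet \ {g}) with hBdef
    have hnd : ∀ d ∈ B, ¬ d.IsDiag := by
      intro d hd
      simp only [hBdef, Set.mem_insert_iff, Set.mem_diff, Set.mem_singleton_iff] at hd
      rcases hd with rfl | ⟨hd, -⟩
      · rw [Sym2.mk_isDiag_iff]; exact hxy
      · exact G₁.not_isDiag_of_mem_edgeSet hd
    have hE : (fromEdgeSet B).edgeSet = B := edgeSet_fromEdgeSet_eq hnd
    have hBc : (B.ncard : ℤ) = (G₁.edgeSet.ncard : ℤ) := by
      have hni : s(x, y) ∉ G₁.edgeSet \ {g} := fun h => he1 h.1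
      have hh1 : B.ncard = (G₁.edgeSet \ {g}).ncard + 1 := by
        rw [hBdef]; rw [Set.ncard_insert_of_notMem hni (Set.toFinite _)]
      have hd2 := Set.ncard_diff_singleton_add_one hg1 (Set.toFinite _)
      omega
    refine Or.inr ⟨?_, ?_⟩
    · rw [sparse_iff]
      intro S hS
      by_cases hin : x ∈ S ∧ y ∈ S
      · have hset : ES (fromEdgeSet B).edgeSet S =
            insert s(x, y) (ES G₁.edgeSet S \ {g}) := by
          rw [hE]
          ext d
          simp only [mem_ES, hBdef, Set.mem_insert_iff, Set.mem_diff,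
            Set.mem_singleton_iff]
          constructor
          · rintro ⟨(rfl | ⟨hd, hdg⟩), hdS⟩
            · exact Or.inl rfl
            · exact Or.inr ⟨⟨hd, hdS⟩, hdg⟩
          · rintro (rfl | ⟨⟨hd, hdS⟩, hdg⟩)
            · exact ⟨Or.inl rfl, hxyU S hin.1 hin.2⟩
            · exact ⟨Or.inr ⟨hd, hdg⟩, hdS⟩
        rw [edgesIn_eq, hset]
        have hnm : s(x, y) ∉ ES G₁.edgeSet S \ {g} := fun h => he1 h.1.1
        rw [Set.ncard_insert_of_notMem hnm (Set.toFinite _)]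
        by_cases htS : (edgesIn G₁ S : ℤ) = fct t1 S
        · have hSTmem : S ∈ T := ⟨hin.1, hin.2, hS, htS⟩
          have hgin : g ∈ ES G₁.edgeSet S :=
            ⟨hg1, fun v hv => hmin S hSTmem (hgS₀ v hv)⟩
          have hdd := Set.ncard_diff_singleton_add_one hgin (Set.toFinite _)
          rw [edgesIn_eq] at htS
          omega
        · have hlt := hs1' S hS
          have hlt' : (edgesIn G₁ S : ℤ) ≤ fct t1 S - 1 := by omega
          have hmono := Set.ncard_le_ncard
            (Set.diff_subset : ES G₁.edgeSet S \ {g} ⊆ ES G₁.edgeSet S) (Set.toFinite _)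
          rw [edgesIn_eq] at hlt'
          omega
      · have hsub : ES (fromEdgeSet B).edgeSet S ⊆ ES G₁.edgeSet S := by
          rintro d ⟨hd, hdS⟩
          rw [hE] at hd
          simp only [hBdef, Set.mem_insert_iff, Set.mem_diff, Set.mem_singleton_iff] at hd
          rcases hd with rfl | ⟨hd1, -⟩
          · exact absurd ⟨hdS x (Sym2.mem_mk_left x y), hdS y (Sym2.mem_mk_right x y)⟩ hin
          · exact ⟨hd1, hdS⟩
        have hmono := Set.ncard_le_ncard hsub (Set.toFinite _)
        have hb := hs1' S hS
        rw [edgesIn_eq] at hb ⊢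
        omega
    · have hfin : ((fromEdgeSet B).edgeSet.ncard : ℤ) = fct t1 Set.univ := by
        rw [hE]
        exact hBc.trans hc1
      exact hfin
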